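/- The basic form associated to a closed conditional expression is unique: if t1 and t2 are basic forms and CP proves t1 = t2, then t1 and t2 are syntactically identical (for any set of atoms A, using the free-valuation semantics to distinguish basic forms). -/

import Mathlib

inductive CE (A : Type) : Type
  | tt : CE A
  | ff : CE A
  | atom : A → CE A
  | cond : CE A → CE A → CE A → CE A

inductive Deriv {A : Type} (Ax : CE A → CE A → Prop) : CE A → CE A → Prop
  | ax {t t'} : Ax t t' → Deriv Ax t t'
  | refl (t) : Deriv Ax t t
  | symm {t t'} : Deriv Ax t t' → Deriv Ax t' t
  | trans {t t' t''} : Deriv Ax t t' → Deriv Ax t' t'' → Deriv Ax t t''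
  | congr {x x' y y' z z'} : Deriv Ax x x' → Deriv Ax y y' → Deriv Ax z z' →
      Deriv Ax (.cond x y z) (.cond x' y' z')
  | cp1 (x y) : Deriv Ax (.cond x .tt y) x
  | cp2 (x y) : Deriv Ax (.cond x .ff y) y
  | cp3 (x) : Deriv Ax (.cond .tt x .ff) x
  | cp4 (x y z u v) : Deriv Ax (.cond x (.cond y z u) v) (.cond (.cond x y v) z (.cond x u v))

/-- Derivability from the CP axioms alone (no extra axioms). -/
def CP {A : Type} : CE A → CE A → Prop := Deriv (fun _ _ => False)

/-- Basic forms: T, F, and t1 ◁ a ▷ t2 with a an atom and t1, t2 basic forms. -/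
inductive BasicForm {A : Type} : CE A → Prop
  | tt : BasicForm .tt
  | ff : BasicForm .ff
  | cond {t1 t2 : CE A} (a : A) : BasicForm t1 → BasicForm t2 →
      BasicForm (.cond t1 (.atom a) t2)


/-!
Interpret a conditional expression as a map on states that returns a truth value together with
the state left after evaluation; the CP axioms are sound for this interpretation. On a basic form
the state transformer prepends the word of atoms read, whose first letter is the root atom, so the
root atom is observable. Choosing the answer to the root atom freely then separates the two
branches, and uniqueness follows by induction on basic forms.
-/

namespace CE

variable {A : Type}

/-- A state `f` assigns to the nonempty string `a σ` the truth value `f a σ`. -/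
def State (A : Type) : Type := A → List A → Bool

namespace State

def shift (a : A) (f : State A) : State A := fun b σ => f a (b :: σ)

def shiftWord : List A → State A → State A
  | [], f => f
  | a :: w, f => fun b σ => f a (w ++ b :: σ)

theorem shiftWord_shift (w : List A) (a : A) (f : State A) :
    (f.shift a).shiftWord w = f.shiftWord (a :: w) := by
  cases w <;> rfl

/-- Answers `e` to the first atom read and behaves as `g` afterwards. -/
def cons (e : Bool) (g : State A) : State A
  | _, [] => e
  | _, b :: σ => g b σ

open Classical in
noncomputable def headObserver (o : Option A) : State A :=
  fun b σ => decide ((b :: σ).dropLast.head? = o)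

theorem shiftWord_headObserver_apply_eq_true (w : List A) (o : Option A) (c : A) :
    (headObserver o).shiftWord w c [] = true ↔ w.head? = o := by
  cases w with
  | nil => simp [shiftWord, headObserver]
  | cons a w =>
    simp only [shiftWord, headObserver, ← List.cons_append, List.dropLast_concat,
      decide_eq_true_eq]

theorem head?_eq_of_shiftWord_headObserver_eq {w₁ w₂ : List A}
    (h : (headObserver w₁.head?).shiftWord w₁ = (headObserver w₁.head?).shiftWord w₂) :
    w₁.head? = w₂.head? := by
  have key (c : A) : w₁.head? = w₂.head? := by
    have hw₁ := (shiftWord_headObserver_apply_eq_true w₁ w₁.head? c).mpr rfl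
    rw [h, shiftWord_headObserver_apply_eq_true] at hw₁
    exact hw₁.symm
  rcases w₁ with _ | ⟨c, _⟩
  · rcases w₂ with _ | ⟨c, _⟩
    exacts [rfl, key c]
  · exact key c

end State

/-- `(run t f).1` is `t ! f` and `(run t f).2` is `t • f`. -/
def run : CE A → State A → Bool × State A
  | tt, f => (true, f)
  | ff, f => (false, f)
  | atom a, f => (f a [], f.shift a)
  | cond x y z, f => if (run y f).1 then run x (run y f).2 else run z (run y f).2

def headAtom : CE A → Option A
  | cond _ (atom a) _ => some a
  | _ => none

theorem run_cond_atom_cons (x y : CE A) (a : A) (e : Bool) (g : State A) :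
    run (cond x (atom a) y) (State.cons e g) = if e then run x g else run y g := by
  cases e <;> rfl

theorem run_eq_of_run_cond_atom_eq {x x' y y' : CE A} {a : A}
    (h : run (cond x (atom a) y) = run (cond x' (atom a) y')) : run x = run x' ∧ run y = run y' :=
  ⟨funext fun g => by simpa [run_cond_atom_cons] using congrFun h (State.cons true g),
    funext fun g => by simpa [run_cond_atom_cons] using congrFun h (State.cons false g)⟩

end CE

section

open CE

variable {A : Type}

theorem Deriv.run_eq {Ax : CE A → CE A → Prop} (hAx : ∀ t t', Ax t t' → run t = run t')
    {t t' : CE A} (h : Deriv Ax t t') : run t = run t' := by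
  induction h with
  | ax h => exact hAx _ _ h
  | refl => rfl
  | symm _ ih => exact ih.symm
  | trans _ _ ih ih' => exact ih.trans ih'
  | congr _ _ _ ihx ihy ihz =>
    funext f
    simp only [run, ihx, ihy, ihz]
  | cp1 | cp2 =>
    funext f
    simp [run]
  | cp3 x =>
    funext f
    simp only [run]
    rcases run x f with ⟨_ | _, g⟩ <;> rfl
  | cp4 x y z u v =>
    funext f
    simp only [run]
    by_cases hz : (run z f).1 <;> simp [hz]

theorem BasicForm.exists_run_snd_eq_shiftWord {t : CE A} (h : BasicForm t)
    (f : State A) : ∃ w : List A, w.head? = t.headAtom ∧ (run t f).2 = f.shiftWord w := by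
  induction h generalizing f with
  | tt | ff => exact ⟨[], rfl, rfl⟩
  | cond a _ _ ih₁ ih₂ =>
    obtain ⟨w₁, -, hw₁⟩ := ih₁ (f.shift a)
    obtain ⟨w₂, -, hw₂⟩ := ih₂ (f.shift a)
    cases ha : f a []
    · exact ⟨a :: w₂, rfl, by simp [run, ha, hw₂, State.shiftWord_shift]⟩
    · exact ⟨a :: w₁, rfl, by simp [run, ha, hw₁, State.shiftWord_shift]⟩

theorem BasicForm.headAtom_eq_of_run_eq {t₁ t₂ : CE A} (h₁ : BasicForm t₁)
    (h₂ : BasicForm t₂) (h : run t₁ = run t₂) : t₁.headAtom = t₂.headAtom := by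
  obtain ⟨w₁, hw₁, hrun₁⟩ :=
    h₁.exists_run_snd_eq_shiftWord (State.headObserver t₁.headAtom)
  obtain ⟨w₂, hw₂, hrun₂⟩ :=
    h₂.exists_run_snd_eq_shiftWord (State.headObserver t₁.headAtom)
  rw [← hw₁, ← hw₂]
  apply State.head?_eq_of_shiftWord_headObserver_eq
  rw [hw₁, ← hrun₁, ← hrun₂, h]

theorem BasicForm.eq_of_run_eq {t₁ t₂ : CE A} (h₁ : BasicForm t₁) (h₂ : BasicForm t₂)
    (h : run t₁ = run t₂) : t₁ = t₂ := by
  induction h₁ generalizing t₂ with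
  | tt | ff =>
    have hhead := BasicForm.headAtom_eq_of_run_eq (by constructor) h₂ h
    have hval := congrArg Prod.fst (congrFun h fun _ _ => true)
    cases h₂ <;> simp [run, headAtom] at hhead hval ⊢
  | cond a hs₁ hs₂ ih₁ ih₂ =>
    have hhead := (BasicForm.cond a hs₁ hs₂).headAtom_eq_of_run_eq h₂ h
    cases h₂ with
    | tt | ff => simp [headAtom] at hhead
    | cond b hu₁ hu₂ =>
      obtain rfl : a = b := by simpa [headAtom] using hhead
      obtain ⟨hrun₁, hrun₂⟩ := run_eq_of_run_cond_atom_eq h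
      rw [ih₁ hu₁ hrun₁, ih₂ hu₂ hrun₂]

end

theorem basic_form_unique (A : Type) (t1 t2 : CE A)
    (h1 : BasicForm t1) (h2 : BasicForm t2) (h : CP t1 t2) : t1 = t2 :=
  h1.eq_of_run_eq h2 (Deriv.run_eq (fun _ _ => False.elim) h)
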